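/- arXiv:2203.00118 — 3 statements merged into one kernel-verified Lean document; each statement's English description precedes it below -/
import Mathlib

section
/- Let K be a compact region in ℝ³. For each x ∈ K, the evaluation map ev_x : C(K, ℍ) → ℍ, ev_x(f) = f(x), is a spin character of K; moreover the map x ↦ (restriction of ev_x to 𝓜⁺(K)) is a bijection from K onto the set of restrictions to 𝓜⁺(K) of spin characters of K. (Bijectivity part of the main theorem: the spinor spectrum is in bijection with the region.) -/
noncomputable section

abbrev R3 : Type := EuclideanSpace ℝ (Fin 3)

abbrev Quat := Quaternion ℝ

def e (m : Fin 3) : R3 := EuclideanSpace.single m 1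

def qi : Quat := ⟨0, 1, 0, 0⟩
def qj : Quat := ⟨0, 0, 1, 0⟩
def qk : Quat := ⟨0, 0, 0, 1⟩

/-- `f` is monogenic on `U`. -/
def MonogenicOn (f : R3 → Quat) (U : Set R3) : Prop :=
  ∀ x ∈ U, DifferentiableAt ℝ f x ∧
    fderiv ℝ f x (e 0) + qk * fderiv ℝ f x (e 1) + qj * fderiv ℝ f x (e 2) = 0

open Classical in
/-- Extension of a continuous map on `K` by zero. -/
def extendK (K : Set R3) (f : C(K, Quat)) : R3 → Quat :=
  fun x => if h : x ∈ K then f ⟨x, h⟩ else 0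

/-- `f : C(K, Quat)` is monogenic on the interior of `K`. -/
def MonogenicOnInterior (K : Set R3) (f : C(K, Quat)) : Prop :=
  MonogenicOn (extendK K f) (interior K)

/-- `w` lies in the real plane `ℝ·1 + ℝ·q`. -/
def InPlane (q w : Quat) : Prop := ∃ a b : ℝ, w = a • 1 + b • q

/-- Plane-spinor fields on `K`. -/
def IsPlaneSpinor (K : Set R3) (f : C(K, Quat)) : Prop :=
  ∃ q : Quat, q ^ 2 = -1 ∧ (∀ x, InPlane q (f x)) ∧ MonogenicOnInterior K f

/-- Spin characters of `K`. -/
structure IsSpinCharacter (K : Set R3) (δ : C(K, Quat) → Quat) : Prop where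
  continuous : Continuous δ
  map_add : ∀ f g : C(K, Quat), δ (f + g) = δ f + δ g
  map_smul_right : ∀ (f : C(K, Quat)) (a : Quat), δ (f * ContinuousMap.const _ a) = δ f * a
  map_one : δ 1 = 1
  grade_real : ∀ f : C(K, Quat), (∀ x, ∃ a : ℝ, f x = (a : ℝ) • 1) → ∃ a : ℝ, δ f = (a : ℝ) • 1
  grade_imaginary : ∀ f : C(K, Quat), (∀ x, (f x).re = 0) → (δ f).re = 0
  map_list_prod : ∀ L : List C(K, Quat), (∀ f ∈ L, IsPlaneSpinor K f) →
    δ L.prod = (L.map δ).prod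

/-- The monogenic spinor fields 𝓜⁺(K): the closure in `C(K, Quat)` of restrictions of
functions monogenic on an open neighborhood of `K`. -/
def MonSpinorFields (K : Set R3) : Set C(K, Quat) :=
  closure { f : C(K, Quat) | ∃ U : Set R3, ∃ F : R3 → Quat,
    IsOpen U ∧ K ⊆ U ∧ MonogenicOn F U ∧ ∀ x : K, f x = F x }

/-- A compact region in ℝ³. -/
def IsCompactRegion (K : Set R3) : Prop :=
  K.Nonempty ∧ IsCompact K ∧ K = closure (interior K) ∧ IsConnected Kᶜ

/-!
Evaluations are spin characters, and the Fueter variables `x₀ + x₁ k` and `x₀ + x₂ j`, monogenic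
on all of ℝ³, separate points, whence injectivity. Conversely, let `δ` be a spin character and
`a ∈ ℝ³` the point with coordinates the real numbers `δ(xₘ)`. Constants and the two Fueter
variables are plane spinors, so `δ` agrees with evaluation at `a` on the real algebra they
generate. That algebra contains the coordinate functions, so by Stone–Weierstrass it is dense
in `C(K, ℍ)`, and by continuity `δ` is multiplicative on all of `C(K, ℍ)`. If `a ∉ K`, the
field `|x - a|²` would be a unit of `C(K, ℍ)` sent to `0` by `δ`; hence `a ∈ K`, and
`δ = ev_a` by density.
-/

-- The literals `qi`, `qj`, `qk` unfold to terms of `QuaternionAlgebra ℝ (-1) 0 (-1)` on which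
-- the simp lemmas of `ℍ` (those about `1` included) do not fire: hence the local simp attribute,
-- and the lemmas of `ℍ` are applied before the literals are unfolded.
attribute [local simp] Quaternion.re_one Quaternion.imI_one Quaternion.imJ_one Quaternion.imK_one

lemma qk_mul_qk : qk * qk = -1 := by
  ext <;> simp only [Quaternion.re_mul, Quaternion.imI_mul, Quaternion.imJ_mul,
    Quaternion.imK_mul] <;> simp [qk]

lemma qj_mul_qj : qj * qj = -1 := by
  ext <;> simp only [Quaternion.re_mul, Quaternion.imI_mul, Quaternion.imJ_mul,
    Quaternion.imK_mul] <;> simp [qj]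

lemma quat_eq_sum_basis (c : Quat) : c = c.re + c.imI * qi + c.imJ * qj + c.imK * qk := by
  ext <;> simp [Quaternion.re_mul, Quaternion.imI_mul, Quaternion.imJ_mul,
    Quaternion.imK_mul] <;> simp [qi, qj, qk]

lemma coe_eq_smul_one (r : ℝ) : (r : Quat) = r • 1 := by
  rw [← Quaternion.coe_mul_eq_smul, mul_one]

lemma exists_sq_eq_neg_one_inPlane (c : Quat) : ∃ q : Quat, q ^ 2 = -1 ∧ InPlane q c := by
  by_cases hc : c.im = 0
  · refine ⟨qk, by rw [sq, qk_mul_qk], c.re, 0, ?_⟩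
    rw [zero_smul, add_zero, ← coe_eq_smul_one]
    nth_rewrite 1 [← c.re_add_im]
    rw [hc, add_zero]
  · have hn : ‖c.im‖ ≠ 0 := norm_ne_zero_iff.mpr hc
    refine ⟨‖c.im‖⁻¹ • c.im, ?_, c.re, ‖c.im‖, ?_⟩
    · rw [smul_pow, Quaternion.im_sq, Quaternion.normSq_eq_norm_mul_self, ← sq, inv_pow,
        smul_neg, ← Quaternion.coe_mul_eq_smul, ← Quaternion.coe_mul,
        inv_mul_cancel₀ (pow_ne_zero 2 hn), Quaternion.coe_one]
    · rw [smul_smul, mul_inv_cancel₀ hn, one_smul, ← coe_eq_smul_one, c.re_add_im]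

lemma ContinuousMap.list_prod_apply {X M : Type*} [TopologicalSpace X] [TopologicalSpace M]
    [Monoid M] [ContinuousMul M] (l : List C(X, M)) (x : X) :
    l.prod x = (l.map fun f => f x).prod := by
  induction l with
  | nil => rfl
  | cons f l ih => simp [ih]

lemma monogenicOn_continuousLinearMap (L : R3 →L[ℝ] Quat)
    (hL : L (e 0) + qk * L (e 1) + qj * L (e 2) = 0) (U : Set R3) : MonogenicOn L U :=
  fun _ _ => ⟨L.differentiableAt, by rw [L.fderiv]; exact hL⟩

lemma monogenicOn_const (c : Quat) (U : Set R3) : MonogenicOn (fun _ => c) U :=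
  fun _ _ => ⟨differentiableAt_const c, by simp⟩

def quatCoord (m : Fin 3) : R3 →L[ℝ] Quat := (EuclideanSpace.proj m).smulRight 1

def fueterVariable (m : Fin 3) (u : Quat) : R3 →L[ℝ] Quat :=
  quatCoord 0 + (EuclideanSpace.proj m).smulRight u

@[simp] lemma quatCoord_apply (m : Fin 3) (x : R3) : quatCoord m x = x m • 1 := rfl

@[simp] lemma fueterVariable_apply (m : Fin 3) (u : Quat) (x : R3) :
    fueterVariable m u x = x 0 • 1 + x m • u := rfl

lemma monogenicOn_fueterVariable_one_qk (U : Set R3) : MonogenicOn (fueterVariable 1 qk) U :=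
  monogenicOn_continuousLinearMap _ (by simp [e, qk_mul_qk]) U

lemma monogenicOn_fueterVariable_two_qj (U : Set R3) : MonogenicOn (fueterVariable 2 qj) U :=
  monogenicOn_continuousLinearMap _ (by simp [e, qj_mul_qj]) U

lemma eq_of_fueterVariable_eq {x y : R3} (h1 : fueterVariable 1 qk x = fueterVariable 1 qk y)
    (h2 : fueterVariable 2 qj x = fueterVariable 2 qj y) : x = y := by
  simp only [fueterVariable_apply] at h1 h2
  have h0 := congrArg QuaternionAlgebra.re h1
  have h1 := congrArg QuaternionAlgebra.imK h1
  have h2 := congrArg QuaternionAlgebra.imJ h2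
  simp only [Quaternion.re_add, Quaternion.imK_add, Quaternion.imJ_add,
    Quaternion.re_smul, Quaternion.imK_smul, Quaternion.imJ_smul] at h0 h1 h2
  simp [qj, qk] at h0 h1 h2
  ext m
  fin_cases m <;> simpa

lemma MonogenicOn.monogenicOnInterior_restrict {K : Set R3} {F : C(R3, Quat)}
    (hF : MonogenicOn F (interior K)) : MonogenicOnInterior K (F.restrict K) := by
  intro x hx
  have hFx : extendK K (F.restrict K) =ᶠ[nhds x] F := by
    filter_upwards [isOpen_interior.mem_nhds hx] with y hy
    simp [extendK, interior_subset hy]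
  rw [hFx.differentiableAt_iff, hFx.fderiv_eq]
  exact hF x hx

lemma isPlaneSpinor_restrict {K : Set R3} {F : C(R3, Quat)} {q : Quat} (hq : q ^ 2 = -1)
    (hFq : ∀ x : K, InPlane q (F x)) (hF : MonogenicOn F (interior K)) :
    IsPlaneSpinor K (F.restrict K) :=
  ⟨q, hq, hFq, hF.monogenicOnInterior_restrict⟩

lemma restrict_mem_monSpinorFields {K : Set R3} {F : C(R3, Quat)}
    (hF : MonogenicOn F Set.univ) : F.restrict K ∈ MonSpinorFields K :=
  subset_closure ⟨Set.univ, F, isOpen_univ, Set.subset_univ K, hF, fun _ => rfl⟩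

def spinGenerators : Set C(R3, Quat) :=
  Set.range (ContinuousMap.const R3) ∪
    {(fueterVariable 1 qk : C(R3, Quat)), (fueterVariable 2 qj : C(R3, Quat))}

lemma isPlaneSpinor_restrict_of_mem_spinGenerators {K : Set R3} {F : C(R3, Quat)}
    (hF : F ∈ spinGenerators) : IsPlaneSpinor K (F.restrict K) := by
  rcases hF with ⟨c, rfl⟩ | rfl | rfl
  · obtain ⟨q, hq, hc⟩ := exists_sq_eq_neg_one_inPlane c
    exact isPlaneSpinor_restrict hq (fun _ => hc) (monogenicOn_const c _)
  · exact isPlaneSpinor_restrict (by rw [sq, qk_mul_qk]) (fun x => ⟨x.1 0, x.1 1, rfl⟩)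
      (monogenicOn_fueterVariable_one_qk _)
  · exact isPlaneSpinor_restrict (by rw [sq, qj_mul_qj]) (fun x => ⟨x.1 0, x.1 2, rfl⟩)
      (monogenicOn_fueterVariable_two_qj _)

lemma quatCoord_mem_adjoin (m : Fin 3) :
    (quatCoord m : C(R3, Quat)) ∈ Algebra.adjoin ℝ spinGenerators := by
  have hconst (c : Quat) : ContinuousMap.const R3 c ∈ Algebra.adjoin ℝ spinGenerators :=
    Algebra.subset_adjoin (Or.inl ⟨c, rfl⟩)
  have hZ1 : (fueterVariable 1 qk : C(R3, Quat)) ∈ Algebra.adjoin ℝ spinGenerators :=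
    Algebra.subset_adjoin (Or.inr (Or.inl rfl))
  have hZ2 : (fueterVariable 2 qj : C(R3, Quat)) ∈ Algebra.adjoin ℝ spinGenerators :=
    Algebra.subset_adjoin (Or.inr (Or.inr rfl))
  -- conjugation by `i` reverses the sign of the `k`-component of `x₀ + x₁ k`
  have h0 : (quatCoord 0 : C(R3, Quat)) = (2⁻¹ : ℝ) • ((fueterVariable 1 qk : C(R3, Quat)) +
      ContinuousMap.const R3 qi * fueterVariable 1 qk * ContinuousMap.const R3 (-qi)) := by
    ext x <;> simp [Quaternion.re_mul, Quaternion.imI_mul, Quaternion.imJ_mul,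
      Quaternion.imK_mul] <;> simp [qi, qk]
    ring
  have h1 : (quatCoord 1 : C(R3, Quat)) =
      ((fueterVariable 1 qk : C(R3, Quat)) - quatCoord 0) * ContinuousMap.const R3 (-qk) := by
    ext x <;> simp [Quaternion.re_mul, Quaternion.imI_mul, Quaternion.imJ_mul,
      Quaternion.imK_mul] <;> simp [qk]
  have h2 : (quatCoord 2 : C(R3, Quat)) =
      ((fueterVariable 2 qj : C(R3, Quat)) - quatCoord 0) * ContinuousMap.const R3 (-qj) := by
    ext x <;> simp [Quaternion.re_mul, Quaternion.imI_mul, Quaternion.imJ_mul,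
      Quaternion.imK_mul] <;> simp [qj]
  have hq0 : (quatCoord 0 : C(R3, Quat)) ∈ Algebra.adjoin ℝ spinGenerators := by
    rw [h0]
    exact Subalgebra.smul_mem _ (add_mem hZ1 (mul_mem (mul_mem (hconst _) hZ1) (hconst _))) _
  fin_cases m
  · exact hq0
  · exact h1 ▸ mul_mem (sub_mem hZ1 hq0) (hconst _)
  · exact h2 ▸ mul_mem (sub_mem hZ2 hq0) (hconst _)

def quatDistSq (p : R3) : C(R3, Quat) :=
  ∑ m, ((quatCoord m : C(R3, Quat)) - ContinuousMap.const R3 (p m • 1)) ^ 2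

lemma quatDistSq_apply (p x : R3) : quatDistSq p x = (dist x p ^ 2) • 1 := by
  rw [EuclideanSpace.dist_eq, Real.sq_sqrt (by positivity), Finset.sum_smul]
  simp [quatDistSq, ← sub_smul, sq, smul_smul, Real.dist_eq, abs_mul_abs_self]

lemma quatDistSq_mem_adjoin (p : R3) : quatDistSq p ∈ Algebra.adjoin ℝ spinGenerators :=
  sum_mem fun m _ => pow_mem (sub_mem (quatCoord_mem_adjoin m)
    (Algebra.subset_adjoin (Or.inl ⟨_, rfl⟩))) 2

section Density

variable (K : Set R3)

def restrictAlgHom : C(R3, Quat) →ₐ[ℝ] C(K, Quat) :=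
  ContinuousMap.compRightAlgHom ℝ Quat ⟨Subtype.val, continuous_subtype_val⟩

@[simp] lemma restrictAlgHom_apply (F : C(R3, Quat)) : restrictAlgHom K F = F.restrict K := rfl

def ofRealAlgHom : C(K, ℝ) →ₐ[ℝ] C(K, Quat) :=
  AlgHom.compLeftContinuous ℝ (Algebra.ofId ℝ Quat) (continuous_algebraMap ℝ Quat)

@[simp] lemma ofRealAlgHom_apply (p : C(K, ℝ)) (x : K) : ofRealAlgHom K p x = p x := rfl

lemma continuous_ofRealAlgHom : Continuous (ofRealAlgHom K) :=
  ContinuousMap.continuous_postcomp _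

def restrictedSpinAlgebra : Subalgebra ℝ C(K, Quat) :=
  (Algebra.adjoin ℝ spinGenerators).map (restrictAlgHom K)

variable {K}

lemma restrict_mem_restrictedSpinAlgebra {F : C(R3, Quat)}
    (hF : F ∈ Algebra.adjoin ℝ spinGenerators) : F.restrict K ∈ restrictedSpinAlgebra K :=
  Subalgebra.mem_map.2 ⟨F, hF, rfl⟩

lemma ofRealAlgHom_mem_topologicalClosure [CompactSpace K] (p : C(K, ℝ)) :
    ofRealAlgHom K p ∈ (restrictedSpinAlgebra K).topologicalClosure := by
  set S := (restrictedSpinAlgebra K).topologicalClosure.comap (ofRealAlgHom K)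
  have hS : IsClosed (S : Set C(K, ℝ)) :=
    (Subalgebra.isClosed_topologicalClosure _).preimage (continuous_ofRealAlgHom K)
  have hsep : S.SeparatesPoints := by
    intro x y hxy
    obtain ⟨m, hm⟩ : ∃ m, x.1 m ≠ y.1 m := by
      by_contra! h
      exact hxy (Subtype.ext (PiLp.ext h))
    let γ : C(K, ℝ) :=
      ⟨fun x => x.1 m, (EuclideanSpace.proj m).continuous.comp continuous_subtype_val⟩
    have hγ : ofRealAlgHom K γ = (quatCoord m : C(R3, Quat)).restrict K :=
      ContinuousMap.ext fun x => coe_eq_smul_one (x.1 m)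
    refine ⟨γ, ⟨γ, (Subalgebra.mem_comap _ _ _).2 ?_, rfl⟩, hm⟩
    exact hγ ▸ Subalgebra.le_topologicalClosure _
      (restrict_mem_restrictedSpinAlgebra (quatCoord_mem_adjoin m))
  have hStop : S = ⊤ := eq_top_iff.2 <|
    (ContinuousMap.subalgebra_topologicalClosure_eq_top_of_separatesPoints S hsep).symm ▸
      Subalgebra.topologicalClosure_minimal le_rfl hS
  exact (hStop ▸ Algebra.mem_top : p ∈ S)

lemma dense_restrictedSpinAlgebra (hK : IsCompact K) :
    Dense (restrictedSpinAlgebra K : Set C(K, Quat)) := by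
  have := isCompact_iff_compactSpace.mp hK
  rw [dense_iff_closure_eq, ← Subalgebra.topologicalClosure_coe, ← Algebra.coe_top (R := ℝ),
    SetLike.coe_set_eq, eq_top_iff]
  intro f _
  have hconst (c : Quat) :
      ContinuousMap.const K c ∈ (restrictedSpinAlgebra K).topologicalClosure :=
    Subalgebra.le_topologicalClosure _
      (restrict_mem_restrictedSpinAlgebra (Algebra.subset_adjoin (Or.inl ⟨c, rfl⟩)))
  have hcomp (g : C(Quat, ℝ)) :
      ofRealAlgHom K (g.comp f) ∈ (restrictedSpinAlgebra K).topologicalClosure :=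
    ofRealAlgHom_mem_topologicalClosure _
  have hf : f = ofRealAlgHom K ((⟨_, Quaternion.continuous_re⟩ : C(Quat, ℝ)).comp f) +
      ofRealAlgHom K ((⟨_, Quaternion.continuous_imI⟩ : C(Quat, ℝ)).comp f) *
        ContinuousMap.const K qi +
      ofRealAlgHom K ((⟨_, Quaternion.continuous_imJ⟩ : C(Quat, ℝ)).comp f) *
        ContinuousMap.const K qj +
      ofRealAlgHom K ((⟨_, Quaternion.continuous_imK⟩ : C(Quat, ℝ)).comp f) *
        ContinuousMap.const K qk :=
    ContinuousMap.ext fun x => by simpa using quat_eq_sum_basis (f x)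
  rw [hf]
  exact add_mem (add_mem (add_mem (hcomp _) (mul_mem (hcomp _) (hconst _)))
    (mul_mem (hcomp _) (hconst _))) (mul_mem (hcomp _) (hconst _))

end Density

lemma restrict_fueterVariable (K : Set R3) (m : Fin 3) (u : Quat) :
    (fueterVariable m u : C(R3, Quat)).restrict K =
      (quatCoord 0 : C(R3, Quat)).restrict K +
        (quatCoord m : C(R3, Quat)).restrict K * ContinuousMap.const K u :=
  ContinuousMap.ext fun x => by simp

-- For a spin character, `δ (xₘ)` is real by `grade_real`; these reals are the coordinates.
def spinPoint {K : Set R3} (δ : C(K, Quat) → Quat) : R3 :=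
  WithLp.toLp 2 fun m => (δ ((quatCoord m : C(R3, Quat)).restrict K)).re

lemma isSpinCharacter_eval {K : Set R3} (x : K) : IsSpinCharacter K (fun f => f x) where
  continuous := continuous_eval_const x
  map_add _ _ := rfl
  map_smul_right _ _ := rfl
  map_one := rfl
  grade_real _ hf := hf x
  grade_imaginary _ hf := hf x
  map_list_prod L _ := ContinuousMap.list_prod_apply L x

namespace IsSpinCharacter

variable {K : Set R3} {δ : C(K, Quat) → Quat} (hδ : IsSpinCharacter K δ)
include hδ

lemma map_const (c : Quat) : δ (ContinuousMap.const K c) = c := by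
  simpa [hδ.map_one] using hδ.map_smul_right 1 c

lemma map_real_smul (t : ℝ) (f : C(K, Quat)) : δ (t • f) = t • δ f := by
  have hf : t • f = f * ContinuousMap.const K (t • 1) := ContinuousMap.ext fun x => by simp
  rw [hf, hδ.map_smul_right, mul_smul_comm, mul_one]

def toLinearMap : C(K, Quat) →ₗ[ℝ] Quat where
  toFun := δ
  map_add' := hδ.map_add
  map_smul' := hδ.map_real_smul

lemma toLinearMap_apply (f : C(K, Quat)) : hδ.toLinearMap f = δ f := rfl

lemma map_restrict_quatCoord (m : Fin 3) :
    δ ((quatCoord m : C(R3, Quat)).restrict K) = spinPoint δ m • 1 := by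
  obtain ⟨a, ha⟩ :=
    hδ.grade_real ((quatCoord m : C(R3, Quat)).restrict K) fun x => ⟨x.1 m, rfl⟩
  simp [spinPoint, ha]

lemma map_restrict_of_mem_spinGenerators {F : C(R3, Quat)} (hF : F ∈ spinGenerators) :
    δ (F.restrict K) = F (spinPoint δ) := by
  rcases hF with ⟨c, rfl⟩ | rfl | rfl
  · exact hδ.map_const c
  all_goals
    rw [restrict_fueterVariable, hδ.map_add, hδ.map_smul_right, hδ.map_restrict_quatCoord,
      hδ.map_restrict_quatCoord]
    simp

lemma map_restrict_list_prod {l : List C(R3, Quat)} (hl : ∀ F ∈ l, F ∈ spinGenerators) :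
    δ (l.prod.restrict K) = l.prod (spinPoint δ) := by
  rw [← restrictAlgHom_apply, _root_.map_list_prod (restrictAlgHom K) l, hδ.map_list_prod,
    ContinuousMap.list_prod_apply, List.map_map]
  · congr 1
    exact List.map_congr_left fun F hF => hδ.map_restrict_of_mem_spinGenerators (hl F hF)
  · simp only [List.mem_map]
    rintro _ ⟨F, hF, rfl⟩
    exact isPlaneSpinor_restrict_of_mem_spinGenerators (hl F hF)

lemma map_restrict_of_mem_adjoin {F : C(R3, Quat)} (hF : F ∈ Algebra.adjoin ℝ spinGenerators) :
    δ (F.restrict K) = F (spinPoint δ) := by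
  let Φ : C(R3, Quat) →ₗ[ℝ] Quat := hδ.toLinearMap ∘ₗ (restrictAlgHom K).toLinearMap -
    (ContinuousMap.evalCLM ℝ (spinPoint δ)).toLinearMap
  suffices Submodule.span ℝ (Submonoid.closure spinGenerators) ≤ LinearMap.ker Φ by
    rw [← Subalgebra.mem_toSubmodule, Algebra.adjoin_eq_span] at hF
    simpa [Φ, toLinearMap_apply, sub_eq_zero] using this hF
  rw [Submodule.span_le]
  intro F hF
  obtain ⟨l, hl, rfl⟩ := Submonoid.exists_list_of_mem_closure hF
  simpa [Φ, toLinearMap_apply, sub_eq_zero] using hδ.map_restrict_list_prod hl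

lemma map_mul_of_mem {f g : C(K, Quat)} (hf : f ∈ restrictedSpinAlgebra K)
    (hg : g ∈ restrictedSpinAlgebra K) : δ (f * g) = δ f * δ g := by
  obtain ⟨F, hF, rfl⟩ := Subalgebra.mem_map.1 hf
  obtain ⟨G, hG, rfl⟩ := Subalgebra.mem_map.1 hg
  rw [← _root_.map_mul, restrictAlgHom_apply, restrictAlgHom_apply, restrictAlgHom_apply,
    hδ.map_restrict_of_mem_adjoin hF, hδ.map_restrict_of_mem_adjoin hG,
    hδ.map_restrict_of_mem_adjoin (mul_mem hF hG), ContinuousMap.mul_apply]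

lemma map_mul (hK : IsCompact K) (f g : C(K, Quat)) : δ (f * g) = δ f * δ g := by
  have := isCompact_iff_compactSpace.mp hK
  have hB := dense_restrictedSpinAlgebra hK
  have hright : ∀ g ∈ restrictedSpinAlgebra K, ∀ f, δ (f * g) = δ f * δ g := fun g hg =>
    congrFun (Continuous.ext_on hB (hδ.continuous.comp (continuous_mul_const g))
      (hδ.continuous.mul continuous_const) fun f hf => hδ.map_mul_of_mem hf hg)
  exact congrFun (Continuous.ext_on hB (hδ.continuous.comp (continuous_const_mul f))
    (continuous_const.mul hδ.continuous) fun g hg => hright g hg f) g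

def toMonoidHom (hK : IsCompact K) : C(K, Quat) →* Quat where
  toFun := δ
  map_one' := hδ.map_one
  map_mul' := hδ.map_mul hK

lemma spinPoint_mem (hK : IsCompact K) : spinPoint δ ∈ K := by
  by_contra hp
  have hunit : IsUnit ((quatDistSq (spinPoint δ)).restrict K) := by
    refine (ContinuousMap.isUnit_iff_forall_ne_zero _).2 fun x => ?_
    have hx : dist x.1 (spinPoint δ) ≠ 0 := dist_ne_zero.2 fun h => hp (h ▸ x.2)
    simpa [quatDistSq_apply] using hx
  have hzero : δ ((quatDistSq (spinPoint δ)).restrict K) = 0 := by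
    simp [hδ.map_restrict_of_mem_adjoin (quatDistSq_mem_adjoin _), quatDistSq_apply]
  refine not_isUnit_zero (M₀ := Quat) ?_
  rw [← hzero]
  exact hunit.map (hδ.toMonoidHom hK)

lemma eq_eval (hK : IsCompact K) : δ = fun f => f ⟨spinPoint δ, hδ.spinPoint_mem hK⟩ := by
  refine Continuous.ext_on (dense_restrictedSpinAlgebra hK) hδ.continuous
    (continuous_eval_const _) ?_
  rintro _ ⟨F, hF, rfl⟩
  exact hδ.map_restrict_of_mem_adjoin hF

end IsSpinCharacter

/-- Bijectivity part of the main theorem: evaluations are spin characters and the map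
sending a point to the restriction of its evaluation character to 𝓜⁺(K) is a bijection
from `K` onto the set of restrictions of spin characters. -/
theorem spinor_spectrum_bijection (K : Set R3) (hK : IsCompactRegion K) :
    (∀ x : K, IsSpinCharacter K (fun f => f x)) ∧
    Function.Injective (fun (x : K) => fun (f : MonSpinorFields K) => (f : C(K, Quat)) x) ∧
    Set.range (fun (x : K) => fun (f : MonSpinorFields K) => (f : C(K, Quat)) x) =
      { g : MonSpinorFields K → Quat |
        ∃ δ : C(K, Quat) → Quat, IsSpinCharacter K δ ∧ g = fun f : MonSpinorFields K => δ (f : C(K, Quat)) } := by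
  refine ⟨isSpinCharacter_eval, fun x y hxy => ?_, ?_⟩
  · have hF (F : C(R3, Quat)) (hF : MonogenicOn F Set.univ) : F x = F y :=
      congrFun hxy ⟨F.restrict K, restrict_mem_monSpinorFields hF⟩
    exact Subtype.ext <| eq_of_fueterVariable_eq
      (hF (fueterVariable 1 qk) (monogenicOn_fueterVariable_one_qk _))
      (hF (fueterVariable 2 qj) (monogenicOn_fueterVariable_two_qj _))
  · ext g
    constructor
    · rintro ⟨x, rfl⟩
      exact ⟨_, isSpinCharacter_eval x, rfl⟩
    · rintro ⟨δ, hδ, rfl⟩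
      exact ⟨_, by rw [hδ.eq_eval hK.2.1]⟩
end
end

section
/- Let U ⊆ ℝ³ be open, let q ∈ ℍ satisfy q² = −1, and let f, g : ℝ³ → ℍ be monogenic on U with f(x), g(x) ∈ ℝ·1 + ℝ·q for all x ∈ U. Then f(x)·g(x) = g(x)·f(x) for all x ∈ U, the pointwise product f·g is monogenic on U, and f·g takes values in ℝ·1 + ℝ·q on U. (This is the substance of the paper's proposition that the space 𝒜_B(U) of monogenic subsurface spinors is a commutative Banach algebra: it is closed under multiplication and multiplication is commutative.) -/
noncomputable section

/-!
Every quaternion satisfies `q² = 2 Re(q) q - |q|²`, so the plane `ℝ·1 + ℝ·q` is a commutative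
subalgebra of `ℍ`. Since `g` takes values in the commutant of `q` on the open set `U`, so do its
partial derivatives; hence `f(x)` commutes with them, and the Leibniz rule for the Dirac operator
`D = ∂₀ + k ∂₁ + j ∂₂` collapses to `D(fg) = (Df) g + (Dg) f`.
-/

open Filter Topology

theorem Quaternion.mul_self_eq_smul_sub (q : Quat) :
    q * q = (2 * q.re) • q - Quaternion.normSq q • 1 := by
  ext <;> simp [Quaternion.normSq_def'] <;> ring

section InPlane

variable {q w z : Quat}

theorem InPlane.commute_of_commute (hw : InPlane q w) (hz : Commute q z) : Commute w z := by
  obtain ⟨a, b, rfl⟩ := hw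
  exact ((Commute.one_left z).smul_left a).add_left (hz.smul_left b)

theorem InPlane.commute_generator (hw : InPlane q w) : Commute q w :=
  (hw.commute_of_commute (Commute.refl q)).symm

theorem InPlane.commute (hw : InPlane q w) (hz : InPlane q z) : Commute w z :=
  hw.commute_of_commute hz.commute_generator

theorem InPlane.mul (hw : InPlane q w) (hz : InPlane q z) : InPlane q (w * z) := by
  obtain ⟨a, b, rfl⟩ := hw
  obtain ⟨c, d, rfl⟩ := hz
  refine ⟨a * c - b * d * Quaternion.normSq q, a * d + b * c + 2 * b * d * q.re, ?_⟩
  simp only [add_mul, mul_add, smul_mul_smul_comm, one_mul, mul_one,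
    Quaternion.mul_self_eq_smul_sub q]
  module

end InPlane

theorem commute_fderiv_apply_of_eventually_commute {𝕜 E A : Type*} [NontriviallyNormedField 𝕜]
    [NormedAddCommGroup E] [NormedSpace 𝕜 E] [NormedRing A] [NormedAlgebra 𝕜 A]
    {g : E → A} {x : E} {a : A} (hg : DifferentiableAt 𝕜 g x)
    (h : ∀ᶠ y in 𝓝 x, Commute a (g y)) (v : E) : Commute a (fderiv 𝕜 g x v) := by
  set L : A →L[𝕜] A := ContinuousLinearMap.mul 𝕜 A a - (ContinuousLinearMap.mul 𝕜 A).flip a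
  have hLg : L ∘ g =ᶠ[𝓝 x] fun _ => 0 := by
    filter_upwards [h] with y hy
    simp [L, hy.eq]
  have hL : L.comp (fderiv 𝕜 g x) = 0 :=
    (L.hasFDerivAt.comp x hg.hasFDerivAt).unique
      ((hasFDerivAt_const 0 x).congr_of_eventuallyEq hLg)
  simpa [L, commute_iff_eq, sub_eq_zero] using congr($hL v)

def dirac (f : R3 → Quat) (x : R3) : Quat :=
  fderiv ℝ f x (e 0) + qk * fderiv ℝ f x (e 1) + qj * fderiv ℝ f x (e 2)

theorem dirac_mul_of_commute {f g : R3 → Quat} {x : R3} (hf : DifferentiableAt ℝ f x)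
    (hg : DifferentiableAt ℝ g x) (hcomm : ∀ v, Commute (f x) (fderiv ℝ g x v)) :
    dirac (fun y => f y * g y) x = dirac f x * g x + dirac g x * f x := by
  simp only [dirac, fderiv_fun_mul' hf hg, add_apply, smul_apply, smul_eq_mul,
    (hcomm _).eq, MulOpposite.smul_eq_mul_unop, MulOpposite.unop_op]
  noncomm_ring

theorem monogenic_plane_spinors_commutative_algebra_general (U : Set R3) (hU : IsOpen U)
    (q : Quat) (f g : R3 → Quat)
    (hf : MonogenicOn f U) (hg : MonogenicOn g U)
    (hfq : ∀ x ∈ U, InPlane q (f x)) (hgq : ∀ x ∈ U, InPlane q (g x)) :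
    (∀ x ∈ U, f x * g x = g x * f x) ∧
    MonogenicOn (fun x => f x * g x) U ∧
    (∀ x ∈ U, InPlane q (f x * g x)) := by
  refine ⟨fun x hx => ((hfq x hx).commute (hgq x hx)).eq, fun x hx => ?_,
    fun x hx => (hfq x hx).mul (hgq x hx)⟩
  obtain ⟨hfd, hDf⟩ := hf x hx
  obtain ⟨hgd, hDg⟩ := hg x hx
  have hcomm (v : R3) : Commute (f x) (fderiv ℝ g x v) :=
    (hfq x hx).commute_of_commute <| commute_fderiv_apply_of_eventually_commute hgd
      (eventually_of_mem (hU.mem_nhds hx) fun y hy => (hgq y hy).commute_generator) v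
  refine ⟨hfd.mul hgd, ?_⟩
  change dirac _ x = 0
  rw [dirac_mul_of_commute hfd hgd hcomm]
  simp [dirac, hDf, hDg]

/-- Monogenic fields valued in a common plane `ℝ·1 + ℝ·q` commute, their product is
monogenic, and the product again takes values in the plane. -/
theorem monogenic_plane_spinors_commutative_algebra (U : Set R3) (hU : IsOpen U)
    (q : Quat) (hq : q ^ 2 = -1) (f g : R3 → Quat)
    (hf : MonogenicOn f U) (hg : MonogenicOn g U)
    (hfq : ∀ x ∈ U, InPlane q (f x)) (hgq : ∀ x ∈ U, InPlane q (g x)) :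
    (∀ x ∈ U, f x * g x = g x * f x) ∧
    MonogenicOn (fun x => f x * g x) U ∧
    (∀ x ∈ U, InPlane q (f x * g x)) :=
  monogenic_plane_spinors_commutative_algebra_general U hU q f g hf hg hfq hgq

end
end

section
/- Let K ⊆ ℝ³ be a nonempty compact set equal to the closure of its interior and let δ be a spin character of K. Then there exists a point p = (p₀, p₁, p₂) ∈ ℝ³ such that δ(z₀₁|_K) = p₁·1 − p₀·k, δ(z₀₂|_K) = p₂·1 − p₀·j, and δ(z₁₂|_K) = p₂·1 − p₁·i; that is, δ evaluates every monogenic coordinate function at one common point p of ℝ³. (Quaternionic form of the correspondence lemma: δ(z_{ij}) = z_{ij}(x_δ) for some x_δ ∈ ℝⁿ.) -/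
noncomputable section

/-- The monogenic coordinate function `z₀₁(x) = x₁·1 − x₀·k`. -/
def z01 : R3 → Quat := fun x => (x 1) • (1 : Quat) - (x 0) • qk

/-- The monogenic coordinate function `z₀₂(x) = x₂·1 − x₀·j`. -/
def z02 : R3 → Quat := fun x => (x 2) • (1 : Quat) - (x 0) • qj

/-- The monogenic coordinate function `z₁₂(x) = x₂·1 − x₁·i`. -/
def z12 : R3 → Quat := fun x => (x 2) • (1 : Quat) - (x 1) • qi

lemma z01_continuous : Continuous z01 :=
  (((EuclideanSpace.proj (1 : Fin 3)).continuous).smul continuous_const).sub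
    (((EuclideanSpace.proj (0 : Fin 3)).continuous).smul continuous_const)

lemma z02_continuous : Continuous z02 :=
  (((EuclideanSpace.proj (2 : Fin 3)).continuous).smul continuous_const).sub
    (((EuclideanSpace.proj (0 : Fin 3)).continuous).smul continuous_const)

lemma z12_continuous : Continuous z12 :=
  (((EuclideanSpace.proj (2 : Fin 3)).continuous).smul continuous_const).sub
    (((EuclideanSpace.proj (1 : Fin 3)).continuous).smul continuous_const)

/-- The restriction of `z₀₁` to `K` as a continuous map. -/
def z01K (K : Set R3) : C(K, Quat) := ContinuousMap.restrict K ⟨z01, z01_continuous⟩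

/-- The restriction of `z₀₂` to `K` as a continuous map. -/
def z02K (K : Set R3) : C(K, Quat) := ContinuousMap.restrict K ⟨z02, z02_continuous⟩

/-- The restriction of `z₁₂` to `K` as a continuous map. -/
def z12K (K : Set R3) : C(K, Quat) := ContinuousMap.restrict K ⟨z12, z12_continuous⟩

/-!
Grade preservation makes each `δ (xₘ·1)` real, say `pₘ`; since `z_{mn} = xₙ·1 − xₘ·e` with `e` a
constant unit quaternion, right `ℍ`-linearity gives `δ z_{mn} = pₙ·1 − pₘ·e`.
-/

def coordK (K : Set R3) (m : Fin 3) : C(K, Quat) :=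
  ContinuousMap.restrict K
    ⟨fun x => (x m) • (1 : Quat), (EuclideanSpace.proj m).continuous.smul continuous_const⟩

lemma coordK_sub_mul_const_apply (K : Set R3) (m n : Fin 3) (q : Quat) (x : K) :
    (coordK K m - coordK K n * ContinuousMap.const K q) x =
      ((x : R3) m) • (1 : Quat) - ((x : R3) n) • q := by
  show (x : R3) m • (1 : Quat) - (x : R3) n • (1 : Quat) * q = _
  rw [smul_mul_assoc, one_mul]

lemma z01K_eq (K : Set R3) : z01K K = coordK K 1 - coordK K 0 * ContinuousMap.const _ qk :=
  ContinuousMap.ext fun x => (coordK_sub_mul_const_apply K 1 0 qk x).symm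

lemma z02K_eq (K : Set R3) : z02K K = coordK K 2 - coordK K 0 * ContinuousMap.const _ qj :=
  ContinuousMap.ext fun x => (coordK_sub_mul_const_apply K 2 0 qj x).symm

lemma z12K_eq (K : Set R3) : z12K K = coordK K 2 - coordK K 1 * ContinuousMap.const _ qi :=
  ContinuousMap.ext fun x => (coordK_sub_mul_const_apply K 2 1 qi x).symm

namespace IsSpinCharacter

variable {K : Set R3} {δ : C(K, Quat) → Quat}

lemma map_sub (hδ : IsSpinCharacter K δ) (f g : C(K, Quat)) : δ (f - g) = δ f - δ g :=
  (AddMonoidHom.mk' δ hδ.map_add).map_sub f g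

lemma exists_map_coordK_eq (hδ : IsSpinCharacter K δ) :
    ∃ a : Fin 3 → ℝ, ∀ m, δ (coordK K m) = a m • (1 : Quat) :=
  Classical.axiom_of_choice fun m => hδ.grade_real (coordK K m) fun x => ⟨(x : R3) m, rfl⟩

lemma map_coordK_sub_mul_const (hδ : IsSpinCharacter K δ) {a : Fin 3 → ℝ}
    (ha : ∀ m, δ (coordK K m) = a m • (1 : Quat)) (m n : Fin 3) (q : Quat) :
    δ (coordK K m - coordK K n * ContinuousMap.const _ q) = a m • (1 : Quat) - a n • q := by
  rw [hδ.map_sub, hδ.map_smul_right, ha, ha, smul_mul_assoc, one_mul]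

end IsSpinCharacter

theorem character_determines_point_general (K : Set R3)
    (δ : C(K, Quat) → Quat) (hδ : IsSpinCharacter K δ) :
    ∃ p : R3,
      δ (z01K K) = (p 1) • (1 : Quat) - (p 0) • qk ∧
      δ (z02K K) = (p 2) • (1 : Quat) - (p 0) • qj ∧
      δ (z12K K) = (p 2) • (1 : Quat) - (p 1) • qi := by
  obtain ⟨a, ha⟩ := hδ.exists_map_coordK_eq
  refine ⟨WithLp.toLp 2 a, ?_, ?_, ?_⟩
  · rw [z01K_eq]; exact hδ.map_coordK_sub_mul_const ha 1 0 qk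
  · rw [z02K_eq]; exact hδ.map_coordK_sub_mul_const ha 2 0 qj
  · rw [z12K_eq]; exact hδ.map_coordK_sub_mul_const ha 2 1 qi

/-- Correspondence lemma: a spin character evaluates the monogenic coordinate functions
at a common point of ℝ³. -/
theorem character_determines_point (K : Set R3) (hne : K.Nonempty)
    (hc : IsCompact K) (hreg : K = closure (interior K))
    (δ : C(K, Quat) → Quat) (hδ : IsSpinCharacter K δ) :
    ∃ p : R3,
      δ (z01K K) = (p 1) • (1 : Quat) - (p 0) • qk ∧
      δ (z02K K) = (p 2) • (1 : Quat) - (p 0) • qj ∧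
      δ (z12K K) = (p 2) • (1 : Quat) - (p 1) • qi :=
  character_determines_point_general K δ hδ

end
end
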